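/- With the zero-subspace transformation and (A,B,C) of relative degree ρ, the ρ×ρ matrix A_ξ = C̄ * A * S_ξ has the following form: for every i with 0 ≤ i ≤ ρ−2, its i-th row has entry 1 in column i+1 and entry 0 in every other column (i.e., the top (ρ−1)×ρ block is the upper shift [0 I_{ρ−1}]); and its last row equals the 1×ρ row matrix C * A^ρ * S_ξ. -/
import Mathlib


open Matrix

/-- The matrix `A_ξ = C̄ * A * S_ξ` has, for `0 ≤ i ≤ ρ - 2`, its
`i`-th row equal to the standard basis row vector with `1` in column `i + 1` (so the top
`(ρ-1) × ρ` block is `[0 I_{ρ-1}]`), and its last row equals `C * A ^ ρ * S_ξ`. -/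
theorem stmt4 {𝕜 : Type*} [Field 𝕜] {n ρ : ℕ} (hn : 1 ≤ n) (hρ : 1 ≤ ρ) (hρn : ρ ≤ n)
    (A : Matrix (Fin n) (Fin n) 𝕜) (B : Matrix (Fin n) (Fin 1) 𝕜)
    (C : Matrix (Fin 1) (Fin n) 𝕜)
    (hrd : ∀ i : ℕ, i + 2 ≤ ρ → C * A ^ i * B = 0)
    (hrd' : C * A ^ (ρ - 1) * B ≠ 0)
    (Cbar : Matrix (Fin ρ) (Fin n) 𝕜)
    (hCbar : ∀ (i : Fin ρ) (j : Fin n), Cbar i j = (C * A ^ (i : ℕ)) 0 j)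
    (Bz : Matrix (Fin (n - ρ)) (Fin n) 𝕜) (hBz : Bz * B = 0)
    (T : Matrix (Fin n) (Fin n) 𝕜)
    (hT : ∀ (i : Fin n) (j : Fin n),
      T i j = if h : (i : ℕ) < n - ρ then Bz ⟨i, h⟩ j
              else Cbar ⟨(i : ℕ) - (n - ρ), by omega⟩ j)
    (hTinv : IsUnit T.det)
    (Seta : Matrix (Fin n) (Fin (n - ρ)) 𝕜)
    (hSeta : ∀ (i : Fin n) (k : Fin (n - ρ)), Seta i k = T⁻¹ i ⟨(k : ℕ), by omega⟩)
    (Sxi : Matrix (Fin n) (Fin ρ) 𝕜)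
    (hSxi : ∀ (i : Fin n) (k : Fin ρ), Sxi i k = T⁻¹ i ⟨n - ρ + (k : ℕ), by omega⟩)
    (Axi : Matrix (Fin ρ) (Fin ρ) 𝕜)
    (hAxi : Axi = Cbar * A * Sxi)
    :
    (∀ i j : Fin ρ, (i : ℕ) + 1 < ρ →
      Axi i j = if (j : ℕ) = (i : ℕ) + 1 then 1 else 0) ∧
    (∀ j : Fin ρ, Axi ⟨ρ - 1, by omega⟩ j = (C * A ^ ρ * Sxi) 0 j) := by
  have hCA : ∀ (i : Fin ρ) (j : Fin n), (Cbar * A) i j = (C * A ^ ((i : ℕ) + 1)) 0 j := by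
    intro i j
    rw [pow_succ, ← Matrix.mul_assoc]
    simp only [Matrix.mul_apply, hCbar]
  have hAxi' : ∀ (i j : Fin ρ), Axi i j = (C * A ^ ((i : ℕ) + 1) * Sxi) 0 j := by
    intro i j
    rw [hAxi, Matrix.mul_apply, Matrix.mul_apply]
    exact Finset.sum_congr rfl fun k _ => by rw [hCA]
  constructor
  · intro i j hij
    rw [hAxi' i j]
    have hrow : ∀ k : Fin n, (C * A ^ ((i : ℕ) + 1)) 0 k
        = T ⟨n - ρ + ((i : ℕ) + 1), by omega⟩ k := by
      intro k
      rw [hT]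
      rw [dif_neg (by simp)]
      rw [hCbar]
      congr 2
      simp
    have : (C * A ^ ((i : ℕ) + 1) * Sxi) 0 j
        = (T * T⁻¹) ⟨n - ρ + ((i : ℕ) + 1), by omega⟩ ⟨n - ρ + (j : ℕ), by omega⟩ := by
      simp only [Matrix.mul_apply, hrow, hSxi]
    rw [this, Matrix.mul_nonsing_inv T hTinv, Matrix.one_apply]
    by_cases h : (j : ℕ) = (i : ℕ) + 1
    · rw [if_pos h, if_pos (by simp only [Fin.mk.injEq]; omega)]
    · rw [if_neg h, if_neg (by simp only [Fin.mk.injEq]; omega)]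
  · intro j
    rw [hAxi']
    congr 3
    simp [Nat.sub_add_cancel hρ]
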